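/- arXiv:0901.2343 — 3 statements merged into one kernel-verified Lean document; each statement's English description precedes it below -/
import Mathlib

section
/- Let X₁, X₂, … be i.i.d. real-valued random variables and let h : ℝ^m → ℝ (m ≥ 1) be a symmetric Borel-measurable kernel with E|h(X₁,…,X_m)|^{4/3} < ∞. For each n define the centered truncation tail h^{(2)}_n(x₁,…,x_m) = h(x₁,…,x_m)·1{|h(x₁,…,x_m)| > n^{3/2}} − E( h(X₁,…,X_m)·1{|h(X₁,…,X_m)| > n^{3/2}} ). Then n^{-1/2} max_{m ≤ k ≤ n} | k · C(k,m)^{-1} ∑_{1≤i₁<…<i_m≤k} h^{(2)}_n(X_{i₁},…,X_{i_m}) | → 0 in probability as n → ∞. -/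
/-!
Dominate the maximum over `k` by a single random variable. Since `k ↦ k / C(k,m)` is
nonincreasing, every summand indexed by a set `s ⊆ {0, …, k-1}` may be given the weight
`(max s + 1) / C(max s + 1, m) ≥ k / C(k,m)` that it carries when it first appears; this removes
the dependence on `k`. These weights add up to at most `m n`, and every summand has the law of
`h^{(2)}_n(X_1, …, X_m)`, whose mean absolute value is at most
`2 E|h 1{|h| > n^{3/2}}| ≤ 2 n^{-1/2} E(|h|^{4/3} 1{|h| > n^{3/2}})`.
Hence the majorant, divided by `√n`, has mean at most `2 m E(|h|^{4/3} 1{|h| > n^{3/2}}) → 0`,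
and Markov's inequality concludes.
-/

open MeasureTheory ProbabilityTheory Filter Finset Topology

/-- Sum of the kernel `h` over all increasing `m`-tuples of indices from `{0, …, k-1}`
(the summands of a `U`-statistic). -/
noncomputable def uStatSum {Ω : Type*} (m : ℕ) (h : (Fin m → ℝ) → ℝ)
    (X : ℕ → Ω → ℝ) (k : ℕ) (ω : Ω) : ℝ :=
  ∑ s ∈ ((Finset.range k).powersetCard m).attach,
    h (fun j => X (s.1.orderEmbOfFin (Finset.mem_powersetCard.mp s.2).2 j) ω)

/-- First-order projection of a kernel: `x ↦ E h(x, X₂, …, X_m)` where the `X_i` have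
common law `ν`; this realizes the conditional expectation `E(h(X₁,…,X_m) | X₁ = x)`. -/
noncomputable def proj1 (m : ℕ) (hm : 0 < m) (h : (Fin m → ℝ) → ℝ)
    (ν : Measure ℝ) (x : ℝ) : ℝ :=
  ∫ z, h (Function.update z ⟨0, hm⟩ x) ∂(Measure.pi fun _ : Fin m => ν)

/-- The centered truncation tail of the kernel `h` at level `n^{3/2}`:
`h^{(2)}_n = h · 1{|h| > n^{3/2}} - E(h(X₁,…,X_m) · 1{|h| > n^{3/2}})`. -/
noncomputable def truncTail {Ω : Type*} [MeasurableSpace Ω] (μ : Measure Ω) (m : ℕ)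
    (h : (Fin m → ℝ) → ℝ) (X : ℕ → Ω → ℝ) (n : ℕ) (x : Fin m → ℝ) : ℝ :=
  (if (n : ℝ) ^ ((3 : ℝ) / 2) < |h x| then h x else 0) -
    ∫ ω, (if (n : ℝ) ^ ((3 : ℝ) / 2) < |h (fun j => X j ω)| then h (fun j => X j ω)
      else 0) ∂μ

/-- The centered truncated main part of the kernel `h` at level `n^{3/2}`:
`h^{(1)}_n = h · 1{|h| ≤ n^{3/2}} - E(h(X₁,…,X_m) · 1{|h| ≤ n^{3/2}})`. -/
noncomputable def truncMain {Ω : Type*} [MeasurableSpace Ω] (μ : Measure Ω) (m : ℕ)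
    (h : (Fin m → ℝ) → ℝ) (X : ℕ → Ω → ℝ) (n : ℕ) (x : Fin m → ℝ) : ℝ :=
  (if |h x| ≤ (n : ℝ) ^ ((3 : ℝ) / 2) then h x else 0) -
    ∫ ω, (if |h (fun j => X j ω)| ≤ (n : ℝ) ^ ((3 : ℝ) / 2) then h (fun j => X j ω)
      else 0) ∂μ

noncomputable def normalizer (m k : ℕ) : ℝ := k * ((k.choose m : ℕ) : ℝ)⁻¹

lemma normalizer_nonneg (m k : ℕ) : 0 ≤ normalizer m k := by
  unfold normalizer; positivity

lemma normalizer_add_one {m : ℕ} (hm : 0 < m) (k : ℕ) :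
    normalizer m (k + 1) = m / k.choose (m - 1) := by
  obtain ⟨m, rfl⟩ : ∃ m', m = m' + 1 := ⟨m - 1, by omega⟩
  have key : ((k + 1 : ℕ) : ℝ) * k.choose m = (k + 1).choose (m + 1) * (m + 1 : ℕ) := by
    exact_mod_cast Nat.add_one_mul_choose_eq k m
  simp only [normalizer, Nat.add_sub_cancel, ← div_eq_mul_inv]
  rcases le_or_gt m k with hmk | hkm
  · have := Nat.choose_pos hmk
    have := Nat.choose_pos (Nat.succ_le_succ hmk)
    rw [div_eq_div_iff (by positivity) (by positivity)]
    push_cast at key ⊢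
    linarith
  · simp [Nat.choose_eq_zero_of_lt hkm, Nat.choose_eq_zero_of_lt (Nat.succ_lt_succ hkm)]

lemma normalizer_antitoneOn {m : ℕ} (hm : 0 < m) : AntitoneOn (normalizer m) (Set.Ici m) := by
  rintro a (ha : m ≤ a) b - hab
  obtain ⟨a, rfl⟩ : ∃ a', a = a' + 1 := ⟨a - 1, by omega⟩
  obtain ⟨b, rfl⟩ : ∃ b', b = b' + 1 := ⟨b - 1, by omega⟩
  rw [normalizer_add_one hm, normalizer_add_one hm]
  have := Nat.choose_pos (n := a) (k := m - 1) (by omega)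
  gcongr
  omega

lemma sup_insert_self_of_subset_range {n : ℕ} {t : Finset ℕ} (ht : t ⊆ range n) :
    (insert n t).sup id = n := by
  rw [sup_insert, id, sup_eq_left]
  exact Finset.sup_le fun i hi => (mem_range.mp (ht hi)).le

lemma sup_add_one_mem_Icc {m k : ℕ} (hm : 0 < m) {s : Finset ℕ}
    (hs : s ∈ (range k).powersetCard m) : s.sup id + 1 ∈ Set.Icc m k := by
  obtain ⟨hsk, hcard⟩ := mem_powersetCard.mp hs
  obtain ⟨i, hi, hsup⟩ := s.exists_mem_eq_sup (card_pos.mp (hcard ▸ hm)) id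
  refine ⟨?_, ?_⟩
  · simpa [hcard] using card_le_card s.subset_range_sup_succ
  · rw [hsup]; exact mem_range.mp (hsk hi)

-- The sets with maximum `j` number `C(j, m - 1)`, and each has weight `m / C(j, m - 1)`.
lemma sum_normalizer_sup_le {m : ℕ} (hm : 0 < m) (n : ℕ) :
    ∑ s ∈ (range n).powersetCard m, normalizer m (s.sup id + 1) ≤ m * n := by
  obtain ⟨m, rfl⟩ : ∃ m', m = m' + 1 := ⟨m - 1, by omega⟩
  induction n with
  | zero => rw [range_zero, powersetCard_eq_empty.2 (by simp)]; simp
  | succ n ih =>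
    have hn : n ∉ range n := notMem_range_self
    have hnew : ∑ t ∈ (range n).powersetCard m, normalizer (m + 1) ((insert n t).sup id + 1)
        ≤ m + 1 := by
      rw [sum_congr rfl fun t ht => by
          rw [sup_insert_self_of_subset_range (mem_powersetCard.mp ht).1],
        sum_const, card_powersetCard, card_range, normalizer_add_one hm, Nat.add_sub_cancel,
        nsmul_eq_mul]
      rcases (n.choose m).eq_zero_or_pos with h0 | hpos
      · simp only [h0, Nat.cast_zero, zero_mul]; positivity
      · rw [mul_div_cancel₀ _ (by positivity)]; push_cast; rfl
    rw [range_add_one, powersetCard_succ_insert hn, sum_union, sum_image]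
    · rw [Nat.succ_eq_add_one]; push_cast at ih ⊢; linarith
    · intro s hs t ht hst
      have hn' : ∀ u ∈ (range n).powersetCard m, n ∉ u := fun u hu hnu =>
        hn ((mem_powersetCard.mp hu).1 hnu)
      simpa [hn' s hs, hn' t ht] using congrArg (erase · n) hst
    · rw [disjoint_left]
      intro s hs hs'
      obtain ⟨t, -, rfl⟩ := mem_image.mp hs'
      exact hn ((mem_powersetCard.mp hs).1 (mem_insert_self n t))

lemma abs_normalizer_mul_sum_le {m k n : ℕ} (hm : 0 < m) (hkn : k ≤ n) (a : Finset ℕ → ℝ) :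
    |normalizer m k * ∑ s ∈ (range k).powersetCard m, a s|
      ≤ ∑ s ∈ (range n).powersetCard m, normalizer m (s.sup id + 1) * |a s| := by
  calc |normalizer m k * ∑ s ∈ (range k).powersetCard m, a s|
      ≤ ∑ s ∈ (range k).powersetCard m, normalizer m k * |a s| := by
        rw [abs_mul, abs_of_nonneg (normalizer_nonneg m k), ← mul_sum]
        exact mul_le_mul_of_nonneg_left (abs_sum_le_sum_abs _ _) (normalizer_nonneg m k)
    _ ≤ ∑ s ∈ (range k).powersetCard m, normalizer m (s.sup id + 1) * |a s| := by
        refine sum_le_sum fun s hs => mul_le_mul_of_nonneg_right ?_ (abs_nonneg _)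
        have hmem := sup_add_one_mem_Icc hm hs
        exact normalizer_antitoneOn hm hmem.1 (hmem.1.trans hmem.2) hmem.2
    _ ≤ ∑ s ∈ (range n).powersetCard m, normalizer m (s.sup id + 1) * |a s| :=
        sum_le_sum_of_subset_of_nonneg (powersetCard_mono (range_subset_range.mpr hkn))
          fun s _ _ => mul_nonneg (normalizer_nonneg _ _) (abs_nonneg _)

noncomputable def sampleAt {Ω : Type*} (X : ℕ → Ω → ℝ) (m : ℕ) (s : Finset ℕ) (ω : Ω) :
    Fin m → ℝ :=
  if hs : s.card = m then fun j => X (s.orderEmbOfFin hs j) ω else 0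

lemma uStatSum_eq_sum_sampleAt {Ω : Type*} (m : ℕ) (f : (Fin m → ℝ) → ℝ)
    (X : ℕ → Ω → ℝ) (k : ℕ) (ω : Ω) :
    uStatSum m f X k ω = ∑ s ∈ (range k).powersetCard m, f (sampleAt X m s ω) := by
  rw [uStatSum, ← sum_attach ((range k).powersetCard m)]
  refine sum_congr rfl fun s _ => ?_
  rw [sampleAt, dif_pos (mem_powersetCard.mp s.2).2]

noncomputable def uStatMajorant {Ω : Type*} (m : ℕ) (f : (Fin m → ℝ) → ℝ) (X : ℕ → Ω → ℝ)
    (n : ℕ) (ω : Ω) : ℝ :=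
  ∑ s ∈ (range n).powersetCard m, normalizer m (s.sup id + 1) * |f (sampleAt X m s ω)|

lemma uStatMajorant_nonneg {Ω : Type*} (m : ℕ) (f : (Fin m → ℝ) → ℝ) (X : ℕ → Ω → ℝ)
    (n : ℕ) (ω : Ω) : 0 ≤ uStatMajorant m f X n ω :=
  sum_nonneg fun _ _ => mul_nonneg (normalizer_nonneg _ _) (abs_nonneg _)

lemma iSup_abs_normalizer_mul_uStatSum_le {Ω : Type*} {m : ℕ} (hm : 0 < m)
    (f : (Fin m → ℝ) → ℝ) (X : ℕ → Ω → ℝ) (n : ℕ) (ω : Ω) :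
    ⨆ k ∈ Icc m n, |normalizer m k * uStatSum m f X k ω| ≤ uStatMajorant m f X n ω := by
  refine Real.iSup_le (fun k => Real.iSup_le (fun hk => ?_) (uStatMajorant_nonneg ..))
    (uStatMajorant_nonneg ..)
  rw [uStatSum_eq_sum_sampleAt]
  exact abs_normalizer_mul_sum_le hm (mem_Icc.mp hk).2 _

noncomputable def tailCut (t y : ℝ) : ℝ := if t < |y| then y else 0

lemma measurable_tailCut (t : ℝ) : Measurable (tailCut t) :=
  Measurable.ite (measurableSet_lt measurable_const measurable_abs) measurable_id
    measurable_const

lemma abs_tailCut_le (t y : ℝ) : |tailCut t y| ≤ |y| := by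
  unfold tailCut; split_ifs <;> simp

lemma mul_le_rpow_four_thirds {a y : ℝ} (ha : 0 ≤ a) (hay : a ^ 3 ≤ y) :
    a * y ≤ y ^ ((4 : ℝ) / 3) := by
  have hy : 0 ≤ y := (pow_nonneg ha 3).trans hay
  have hcube : a ≤ y ^ ((1 : ℝ) / 3) := by
    calc a = (a ^ 3) ^ ((1 : ℝ) / 3) := by
          rw [← Real.rpow_natCast, ← Real.rpow_mul ha]; norm_num
      _ ≤ y ^ ((1 : ℝ) / 3) := by gcongr
  calc a * y ≤ y ^ ((1 : ℝ) / 3) * y := by gcongr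
    _ = y ^ ((4 : ℝ) / 3) := by
      rw [show (4 : ℝ) / 3 = 1 / 3 + 1 by norm_num, Real.rpow_add' hy (by norm_num),
        Real.rpow_one]

lemma sqrt_mul_abs_tailCut_le (n : ℕ) (y : ℝ) :
    √n * |tailCut ((n : ℝ) ^ ((3 : ℝ) / 2)) y| ≤ |y| ^ ((4 : ℝ) / 3) := by
  unfold tailCut
  split_ifs with hy
  · refine mul_le_rpow_four_thirds (Real.sqrt_nonneg _) (le_of_lt (lt_of_eq_of_lt ?_ hy))
    rw [Real.sqrt_eq_rpow, ← Real.rpow_natCast, ← Real.rpow_mul (Nat.cast_nonneg n)]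
    norm_num
  · simp [Real.rpow_nonneg]

section

variable {Ω : Type*} [MeasurableSpace Ω] {μ : Measure Ω}

lemma MeasureTheory.Integrable.of_integrable_abs_rpow [IsFiniteMeasure μ] {Y : Ω → ℝ}
    (hY : AEStronglyMeasurable Y μ) {p : ℝ} (hp : 1 ≤ p)
    (hmom : Integrable (fun ω => |Y ω| ^ p) μ) : Integrable Y μ := by
  have hmem : MemLp Y (ENNReal.ofReal p) μ := by
    rw [← integrable_norm_rpow_iff hY (by simp; linarith) ENNReal.ofReal_ne_top,
      ENNReal.toReal_ofReal (by linarith)]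
    simpa only [Real.norm_eq_abs] using hmom
  exact memLp_one_iff_integrable.mp (hmem.mono_exponent (ENNReal.one_le_ofReal.mpr hp))

lemma tendsto_sqrt_mul_integral_abs_tailCut {Y : Ω → ℝ} (hY : AEMeasurable Y μ)
    (hmom : Integrable (fun ω => |Y ω| ^ ((4 : ℝ) / 3)) μ) :
    Tendsto (fun n : ℕ => √n * ∫ ω, |tailCut ((n : ℝ) ^ ((3 : ℝ) / 2)) (Y ω)| ∂μ)
      atTop (𝓝 0) := by
  simp_rw [← integral_const_mul]
  have hthreshold : Tendsto (fun n : ℕ => (n : ℝ) ^ ((3 : ℝ) / 2)) atTop atTop :=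
    (tendsto_rpow_atTop (by norm_num)).comp tendsto_natCast_atTop_atTop
  have hbound (n : ℕ) : ∀ᵐ ω ∂μ,
      ‖√n * |tailCut ((n : ℝ) ^ ((3 : ℝ) / 2)) (Y ω)|‖ ≤ |Y ω| ^ ((4 : ℝ) / 3) :=
    ae_of_all _ fun ω => by
      rw [Real.norm_of_nonneg (by positivity)]
      exact sqrt_mul_abs_tailCut_le n (Y ω)
  have hpointwise : ∀ᵐ ω ∂μ,
      Tendsto (fun n : ℕ => √n * |tailCut ((n : ℝ) ^ ((3 : ℝ) / 2)) (Y ω)|) atTop (𝓝 0) :=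
    ae_of_all _ fun ω => tendsto_const_nhds.congr' <|
      (hthreshold.eventually_ge_atTop |Y ω|).mono fun n hn => by simp [tailCut, not_lt.mpr hn]
  simpa using tendsto_integral_of_dominated_convergence _ (fun n =>
    (((measurable_tailCut _).comp_aemeasurable hY).norm.const_mul _).aestronglyMeasurable)
    hmom hbound hpointwise

lemma integral_abs_sub_integral_le [IsProbabilityMeasure μ] {f : Ω → ℝ} (hf : Integrable f μ) :
    ∫ ω, |f ω - ∫ ω', f ω' ∂μ| ∂μ ≤ 2 * ∫ ω, |f ω| ∂μ := by
  calc ∫ ω, |f ω - ∫ ω', f ω' ∂μ| ∂μ ≤ ∫ ω, (|f ω| + |∫ ω', f ω' ∂μ|) ∂μ :=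
        integral_mono (hf.sub (integrable_const _)).abs (hf.abs.add (integrable_const _))
          fun ω => abs_sub _ _
    _ = ∫ ω, |f ω| ∂μ + |∫ ω', f ω' ∂μ| := by
        rw [integral_add hf.abs (integrable_const _), integral_const]; simp
    _ ≤ 2 * ∫ ω, |f ω| ∂μ := by linarith [abs_integral_le_integral_abs (f := f) (μ := μ)]

lemma tendstoInMeasure_zero_of_abs_le [IsFiniteMeasure μ] {ι : Type*} {l : Filter ι}
    {f D : ι → Ω → ℝ} (hfD : ∀ i ω, |f i ω| ≤ D i ω) (hD : ∀ i, Integrable (D i) μ)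
    (hlim : Tendsto (fun i => ∫ ω, D i ω ∂μ) l (𝓝 0)) :
    TendstoInMeasure μ f l (fun _ => 0) := by
  rw [tendstoInMeasure_iff_dist]
  intro ε hε
  have hmarkov (i : ι) :
      μ {ω | ε ≤ dist (f i ω) 0} ≤ ENNReal.ofReal ((∫ ω, D i ω ∂μ) / ε) := by
    calc μ {ω | ε ≤ dist (f i ω) 0} ≤ μ {ω | ε ≤ D i ω} :=
          measure_mono fun ω (hω : ε ≤ dist (f i ω) 0) =>
            hω.trans (by simpa [Real.dist_eq] using hfD i ω)
      _ = ENNReal.ofReal (μ.real {ω | ε ≤ D i ω}) :=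
          (ofReal_measureReal (measure_ne_top _ _)).symm
      _ ≤ ENNReal.ofReal ((∫ ω, D i ω ∂μ) / ε) := by
          refine ENNReal.ofReal_le_ofReal ((le_div_iff₀' hε).mpr ?_)
          exact mul_meas_ge_le_integral_of_nonneg
            (ae_of_all _ fun ω => (abs_nonneg _).trans (hfD i ω)) (hD i) ε
  have hbound : Tendsto (fun i => ENNReal.ofReal ((∫ ω, D i ω ∂μ) / ε)) l (𝓝 0) := by
    simpa using ENNReal.tendsto_ofReal (hlim.div_const ε)
  exact tendsto_of_tendsto_of_tendsto_of_le_of_le tendsto_const_nhds hbound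
    (fun _ => zero_le) hmarkov

end

section

variable {Ω β : Type*} [MeasurableSpace Ω] [MeasurableSpace β] {μ : Measure Ω}
  [IsProbabilityMeasure μ] {X : ℕ → Ω → β}

lemma map_eq_pi_of_iIndepFun_of_identDistrib {ι : Type*} [Fintype ι]
    (hXmeas : ∀ i, Measurable (X i)) (hindep : iIndepFun X μ)
    (hident : ∀ i, IdentDistrib (X i) (X 0) μ μ) {e : ι → ℕ} (he : Function.Injective e) :
    μ.map (fun ω j => X (e j) ω) = Measure.pi fun _ : ι => μ.map (X 0) := by
  rw [(iIndepFun_iff_map_fun_eq_pi_map fun j => (hXmeas (e j)).aemeasurable).mp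
    (hindep.precomp he)]
  exact congrArg Measure.pi (funext fun j => (hident (e j)).map_eq)

end

section

variable {Ω : Type*} [MeasurableSpace Ω] {μ : Measure Ω} [IsProbabilityMeasure μ]
  {X : ℕ → Ω → ℝ} {m : ℕ}

lemma identDistrib_sampleAt (hXmeas : ∀ i, Measurable (X i)) (hindep : iIndepFun X μ)
    (hident : ∀ i, IdentDistrib (X i) (X 0) μ μ) {s : Finset ℕ} (hs : s.card = m) :
    IdentDistrib (sampleAt X m s) (fun ω (j : Fin m) => X j ω) μ μ := by
  have hsample : sampleAt X m s = fun ω j => X (s.orderEmbOfFin hs j) ω := by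
    ext ω; rw [sampleAt, dif_pos hs]
  rw [hsample]
  refine ⟨(measurable_pi_lambda _ fun j => hXmeas _).aemeasurable,
    (measurable_pi_lambda _ fun j => hXmeas _).aemeasurable, ?_⟩
  rw [map_eq_pi_of_iIndepFun_of_identDistrib hXmeas hindep hident
      (s.orderEmbOfFin hs).injective,
    map_eq_pi_of_iIndepFun_of_identDistrib hXmeas hindep hident Fin.val_injective]

lemma identDistrib_abs_comp_sampleAt (hXmeas : ∀ i, Measurable (X i))
    (hindep : iIndepFun X μ) (hident : ∀ i, IdentDistrib (X i) (X 0) μ μ)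
    {f : (Fin m → ℝ) → ℝ} (hf : Measurable f) {s : Finset ℕ} (hs : s.card = m) :
    IdentDistrib (fun ω => |f (sampleAt X m s ω)|) (fun ω => |f (fun j => X j ω)|) μ μ :=
  (identDistrib_sampleAt hXmeas hindep hident hs).comp (measurable_abs.comp hf)

lemma integrable_uStatMajorant (hXmeas : ∀ i, Measurable (X i)) (hindep : iIndepFun X μ)
    (hident : ∀ i, IdentDistrib (X i) (X 0) μ μ) {f : (Fin m → ℝ) → ℝ} (hf : Measurable f)
    (hfX : Integrable (fun ω => f (fun j => X j ω)) μ) (n : ℕ) :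
    Integrable (uStatMajorant m f X n) μ :=
  integrable_finsetSum _ fun _ hs => Integrable.const_mul
    ((identDistrib_abs_comp_sampleAt hXmeas hindep hident hf
      (mem_powersetCard.mp hs).2).integrable_iff.mpr hfX.abs) _

lemma integral_uStatMajorant_le (hm : 0 < m) (hXmeas : ∀ i, Measurable (X i))
    (hindep : iIndepFun X μ) (hident : ∀ i, IdentDistrib (X i) (X 0) μ μ)
    {f : (Fin m → ℝ) → ℝ} (hf : Measurable f)
    (hfX : Integrable (fun ω => f (fun j => X j ω)) μ) (n : ℕ) :
    ∫ ω, uStatMajorant m f X n ω ∂μ ≤ m * n * ∫ ω, |f (fun j => X j ω)| ∂μ := by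
  have hident_abs (s : Finset ℕ) (hs : s ∈ (range n).powersetCard m) :=
    identDistrib_abs_comp_sampleAt hXmeas hindep hident hf (mem_powersetCard.mp hs).2
  calc ∫ ω, uStatMajorant m f X n ω ∂μ
      = (∑ s ∈ (range n).powersetCard m, normalizer m (s.sup id + 1))
          * ∫ ω, |f (fun j => X j ω)| ∂μ := by
        unfold uStatMajorant
        rw [integral_finsetSum _ fun s hs =>
          ((hident_abs s hs).integrable_iff.mpr hfX.abs).const_mul _, sum_mul]
        refine sum_congr rfl fun s hs => ?_
        rw [integral_const_mul, (hident_abs s hs).integral_eq]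
    _ ≤ m * n * ∫ ω, |f (fun j => X j ω)| ∂μ :=
        mul_le_mul_of_nonneg_right (sum_normalizer_sup_le hm n)
          (integral_nonneg fun _ => abs_nonneg _)

lemma tendstoInMeasure_inv_sqrt_mul_iSup_abs_normalizer_mul_uStatSum (hm : 0 < m)
    (hXmeas : ∀ i, Measurable (X i)) (hindep : iIndepFun X μ)
    (hident : ∀ i, IdentDistrib (X i) (X 0) μ μ) {f : ℕ → (Fin m → ℝ) → ℝ}
    (hf : ∀ n, Measurable (f n)) (hfX : ∀ n, Integrable (fun ω => f n (fun j => X j ω)) μ)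
    (hlim : Tendsto (fun n : ℕ => √n * ∫ ω, |f n (fun j => X j ω)| ∂μ) atTop (𝓝 0)) :
    TendstoInMeasure μ
      (fun (n : ℕ) ω => (√n)⁻¹ * ⨆ k ∈ Icc m n, |normalizer m k * uStatSum m (f n) X k ω|)
      atTop (fun _ => 0) := by
  refine tendstoInMeasure_zero_of_abs_le
    (D := fun n ω => (√n)⁻¹ * uStatMajorant m (f n) X n ω) (fun n ω => ?_)
    (fun n => (integrable_uStatMajorant hXmeas hindep hident (hf n) (hfX n) n).const_mul _) ?_
  · rw [abs_of_nonneg (mul_nonneg (by positivity) (Real.iSup_nonneg fun k =>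
      Real.iSup_nonneg fun _ => abs_nonneg _))]
    exact mul_le_mul_of_nonneg_left (iSup_abs_normalizer_mul_uStatSum_le hm _ X n ω)
      (by positivity)
  · refine squeeze_zero (fun n => integral_nonneg fun ω =>
      mul_nonneg (by positivity) (uStatMajorant_nonneg ..)) (fun n => ?_)
      (by simpa using hlim.const_mul (m : ℝ))
    have hsqrt : (√n)⁻¹ * n = √n := by rw [inv_mul_eq_div, Real.div_sqrt]
    calc ∫ ω, (√n)⁻¹ * uStatMajorant m (f n) X n ω ∂μ
        = (√n)⁻¹ * ∫ ω, uStatMajorant m (f n) X n ω ∂μ := integral_const_mul _ _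
      _ ≤ (√n)⁻¹ * (m * n * ∫ ω, |f n (fun j => X j ω)| ∂μ) := by
          gcongr
          exact integral_uStatMajorant_le hm hXmeas hindep hident (hf n) (hfX n) n
      _ = m * (√n * ∫ ω, |f n (fun j => X j ω)| ∂μ) := by
          linear_combination (m * ∫ ω, |f n (fun j => X j ω)| ∂μ) * hsqrt

end

theorem stmt_8_general {Ω : Type*} [MeasurableSpace Ω] (μ : Measure Ω) [IsProbabilityMeasure μ]
    (X : ℕ → Ω → ℝ) (hXmeas : ∀ i, Measurable (X i))
    (hindep : iIndepFun X μ)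
    (hident : ∀ i, IdentDistrib (X i) (X 0) μ μ)
    (m : ℕ) (hm : 0 < m) (h : (Fin m → ℝ) → ℝ) (hhmeas : Measurable h)
    (hmom : Integrable (fun ω => |h (fun j => X j ω)| ^ ((4 : ℝ) / 3)) μ) :
    TendstoInMeasure μ
      (fun (n : ℕ) ω => (Real.sqrt n)⁻¹ *
        ⨆ k ∈ Finset.Icc m n,
          |(k : ℝ) * ((k.choose m : ℝ))⁻¹ * uStatSum m (truncTail μ m h X n) X k ω|)
      atTop (fun _ => 0) := by
  set Y : Ω → ℝ := fun ω => h (fun j => X j ω)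
  have hY : Measurable Y := hhmeas.comp (measurable_pi_lambda _ fun j => hXmeas j)
  set cut : ℕ → ℝ → ℝ := fun n => tailCut ((n : ℝ) ^ ((3 : ℝ) / 2))
  have hcut_int (n : ℕ) : Integrable (fun ω => cut n (Y ω)) μ :=
    (Integrable.of_integrable_abs_rpow hY.aestronglyMeasurable (by norm_num) hmom).mono
      ((measurable_tailCut _).comp hY).aestronglyMeasurable
      (ae_of_all _ fun ω => abs_tailCut_le _ _)
  have hT (n : ℕ) : truncTail μ m h X n = fun x => cut n (h x) - ∫ ω, cut n (Y ω) ∂μ := rfl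
  refine tendstoInMeasure_inv_sqrt_mul_iSup_abs_normalizer_mul_uStatSum hm hXmeas hindep hident
    (fun n => ?_) (fun n => ?_) ?_
  · rw [hT]; exact ((measurable_tailCut _).comp hhmeas).sub_const _
  · rw [hT]; exact (hcut_int n).sub (integrable_const _)
  · refine squeeze_zero (fun n => by positivity) (fun n => ?_)
      (by simpa using (tendsto_sqrt_mul_integral_abs_tailCut hY.aemeasurable hmom).const_mul 2)
    rw [hT, mul_left_comm]
    gcongr
    exact integral_abs_sub_integral_le (hcut_int n)

/-- For i.i.d. `X_i` and a symmetric measurable kernel `h` of order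
`m ≥ 1` with `E|h|^{4/3} < ∞`, the maximal `U`-statistic built from the centered
truncation tails `h^{(2)}_n` satisfies
`n^{-1/2} max_{m ≤ k ≤ n} | k C(k,m)^{-1} ∑_{C(k,m)} h^{(2)}_n(X_{i₁},…,X_{i_m}) | → 0`
in probability. -/
theorem stmt_8 {Ω : Type*} [MeasurableSpace Ω] (μ : Measure Ω) [IsProbabilityMeasure μ]
    (X : ℕ → Ω → ℝ) (hXmeas : ∀ i, Measurable (X i))
    (hindep : iIndepFun X μ)
    (hident : ∀ i, IdentDistrib (X i) (X 0) μ μ)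
    (m : ℕ) (hm : 0 < m) (h : (Fin m → ℝ) → ℝ) (hhmeas : Measurable h)
    (hsymm : ∀ (σ : Equiv.Perm (Fin m)) (x : Fin m → ℝ), h (x ∘ σ) = h x)
    (hmom : Integrable (fun ω => |h (fun j => X j ω)| ^ ((4 : ℝ) / 3)) μ) :
    TendstoInMeasure μ
      (fun (n : ℕ) ω => (Real.sqrt n)⁻¹ *
        ⨆ k ∈ Finset.Icc m n,
          |(k : ℝ) * ((k.choose m : ℝ))⁻¹ * uStatSum m (truncTail μ m h X n) X k ω|)
      atTop (fun _ => 0) :=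
  stmt_8_general μ X hXmeas hindep hident m hm h hhmeas hmom
end

section
/- Let X₁, X₂, … be i.i.d. real-valued random variables and let h : ℝ^m → ℝ (m ≥ 1) be a symmetric Borel-measurable kernel with E|h(X₁,…,X_m)|^{4/3} < ∞. For each n define h^{(2)}_n(x₁,…,x_m) = h(x₁,…,x_m)·1{|h(x₁,…,x_m)| > n^{3/2}} − E( h(X₁,…,X_m)·1{|h(X₁,…,X_m)| > n^{3/2}} ) and its first-order projection h̃^{(2)}_n(x) = E( h^{(2)}_n(X₁,…,X_m) | X₁ = x ). Then n^{-1/2} max_{m ≤ k ≤ n} | k · C(k,m)^{-1} ∑_{1≤i₁<…<i_m≤k} ( h̃^{(2)}_n(X_{i₁}) + … + h̃^{(2)}_n(X_{i_m}) ) | → 0 in probability as n → ∞. -/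
open MeasureTheory ProbabilityTheory Filter Finset Topology

open scoped ENNReal

/-! The linear kernel `∑ⱼ g(vⱼ)` turns the U-statistic into a plain sum: every index `i < k` lies
in `C(k-1, m-1)` of the `m`-subsets of `{0, …, k-1}` and `k · C(k,m)⁻¹ · C(k-1,m-1) = m`, so the
quantity at time `n` is at most `n^{-1/2} m ∑_{i<n} |h̃⁽²⁾ₙ(Xᵢ)|`. In `L¹`, projecting and
centring cost at most a factor `2`, and `|h| ≤ n^{-1/2} |h|^{4/3}` on `{|h| > n^{3/2}}`; hence the
`L¹` norm of the bound is at most `2 m E(|h|^{4/3} 1{|h| > n^{3/2}})`, which tends to `0` by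
dominated convergence. Convergence in `L¹` implies convergence in probability. -/

namespace Finset

theorem sum_orderEmbOfFin {α β : Type*} [LinearOrder α] [AddCommMonoid β] (s : Finset α)
    {k : ℕ} (hs : #s = k) (f : α → β) :
    ∑ j : Fin k, f (s.orderEmbOfFin hs j) = ∑ i ∈ s, f i := by
  rw [← sum_coe_sort s, ← (s.orderIsoOfFin hs).toEquiv.sum_comp]
  rfl

theorem sum_powersetCard_sum {α β : Type*} [DecidableEq α] [AddCommMonoid β] (t : Finset α)
    {n : ℕ} (hn : 1 ≤ n) (f : α → β) :
    ∑ s ∈ t.powersetCard n, ∑ i ∈ s, f i = (#t - 1).choose (n - 1) • ∑ i ∈ t, f i := by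
  rw [sum_comm' (t' := t) (s' := fun i => (t.powersetCard n).filter (i ∈ ·))
    (fun s i => by simp only [mem_filter, mem_powersetCard]; grind), smul_sum]
  refine sum_congr rfl fun i hi => ?_
  have hcard := card_filter_powersetCard_subset {i} t n (singleton_subset_iff.2 hi) hn
  simp only [singleton_subset_iff, card_singleton] at hcard
  rw [sum_const, hcard]

end Finset

theorem uStatSum_sum_comp {Ω : Type*} {m : ℕ} (hm : 0 < m) (g : ℝ → ℝ) (X : ℕ → Ω → ℝ)
    (k : ℕ) (ω : Ω) :
    uStatSum m (fun v => ∑ j : Fin m, g (v j)) X k ω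
      = (k - 1).choose (m - 1) * ∑ i ∈ Finset.range k, g (X i ω) := by
  simp only [uStatSum, Finset.sum_orderEmbOfFin _ _ (fun i => g (X i ω))]
  rw [Finset.sum_attach _ (fun s => ∑ i ∈ s, g (X i ω)), Finset.sum_powersetCard_sum _ hm,
    Finset.card_range, nsmul_eq_mul]

theorem natCast_mul_inv_choose_mul_choose_pred {k m : ℕ} (hm : 0 < m) (hmk : m ≤ k) :
    (k : ℝ) * ((k.choose m : ℝ))⁻¹ * ((k - 1).choose (m - 1) : ℝ) = m := by
  obtain ⟨k, rfl⟩ := Nat.exists_eq_add_one_of_ne_zero (hm.trans_le hmk).ne'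
  obtain ⟨m, rfl⟩ := Nat.exists_eq_add_one_of_ne_zero hm.ne'
  have hpos : ((k + 1).choose (m + 1) : ℝ) ≠ 0 := by
    exact_mod_cast (Nat.choose_pos hmk).ne'
  have key : ((k + 1 : ℕ) : ℝ) * (k.choose m : ℝ)
      = ((k + 1).choose (m + 1) : ℝ) * (m + 1 : ℕ) := by
    exact_mod_cast Nat.add_one_mul_choose_eq k m
  simp only [Nat.add_sub_cancel]
  rw [mul_right_comm, key, mul_comm, ← mul_assoc, inv_mul_cancel₀ hpos, one_mul]

theorem abs_iSup_abs_uStatSum_sum_comp_le {Ω : Type*} {m : ℕ} (hm : 0 < m) (g : ℝ → ℝ)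
    (X : ℕ → Ω → ℝ) (n : ℕ) (ω : Ω) :
    |(⨆ k ∈ Finset.Icc m n, |(k : ℝ) * ((k.choose m : ℝ))⁻¹ *
        uStatSum m (fun v => ∑ j : Fin m, g (v j)) X k ω|)|
      ≤ m * ∑ i ∈ Finset.range n, |g (X i ω)| := by
  have hbound : (0 : ℝ) ≤ m * ∑ i ∈ Finset.range n, |g (X i ω)| := by positivity
  rw [abs_of_nonneg (Real.iSup_nonneg fun k => Real.iSup_nonneg fun _ => abs_nonneg _)]
  refine Real.iSup_le (fun k => Real.iSup_le (fun hk => ?_) hbound) hbound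
  obtain ⟨hmk, hkn⟩ := Finset.mem_Icc.1 hk
  rw [uStatSum_sum_comp hm, ← mul_assoc, natCast_mul_inv_choose_mul_choose_pred hm hmk,
    abs_mul, Nat.abs_cast]
  gcongr
  exact (Finset.abs_sum_le_sum_abs _ _).trans <| Finset.sum_le_sum_of_subset_of_nonneg
    (Finset.range_subset_range.2 hkn) fun _ _ _ => abs_nonneg _

-- `truncTail μ m h X n` is definitionally `tailPart (n ^ (3/2)) ∘ h` minus its mean.
noncomputable def tailPart (t a : ℝ) : ℝ := if t < |a| then a else 0

theorem measurable_tailPart (t : ℝ) : Measurable (tailPart t) :=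
  Measurable.ite (measurableSet_lt measurable_const continuous_abs.measurable) measurable_id
    measurable_const

theorem measurable_truncTail {Ω : Type*} [MeasurableSpace Ω] (μ : Measure Ω) {m : ℕ}
    {h : (Fin m → ℝ) → ℝ} (hh : Measurable h) (X : ℕ → Ω → ℝ) (n : ℕ) :
    Measurable (truncTail μ m h X n) :=
  ((measurable_tailPart _).comp hh).sub_const _

theorem abs_tailPart_le_abs (t a : ℝ) : |tailPart t a| ≤ |a| := by
  unfold tailPart; split_ifs <;> simp

theorem abs_le_inv_sqrt_mul_rpow {t a : ℝ} (ht : 0 < t) (hta : t ^ ((3 : ℝ) / 2) < |a|) :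
    |a| ≤ (√t)⁻¹ * |a| ^ ((4 : ℝ) / 3) := by
  have hs : 0 < √t := Real.sqrt_pos.2 ht
  have hcube : √t ^ 3 < (|a| ^ ((1 : ℝ) / 3)) ^ 3 := by
    have hcube_root : (|a| ^ ((1 : ℝ) / 3)) ^ 3 = |a| := by
      rw [← Real.rpow_natCast, ← Real.rpow_mul (abs_nonneg a)]; norm_num
    have hsqrt_cube : √t ^ 3 = t ^ ((3 : ℝ) / 2) := by
      rw [Real.sqrt_eq_rpow, ← Real.rpow_natCast, ← Real.rpow_mul ht.le]; norm_num
    rwa [hcube_root, hsqrt_cube]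
  have hroot : √t ≤ |a| ^ ((1 : ℝ) / 3) :=
    (lt_of_pow_lt_pow_left₀ 3 (by positivity) hcube).le
  have hsplit : |a| ^ ((4 : ℝ) / 3) = |a| * |a| ^ ((1 : ℝ) / 3) := by
    rw [← Real.rpow_one_add' (abs_nonneg a) (by norm_num)]; norm_num
  rw [hsplit, le_inv_mul_iff₀ hs]
  nlinarith [abs_nonneg a]

theorem abs_tailPart_le {t : ℝ} (ht : 0 < t) (a : ℝ) :
    |tailPart (t ^ ((3 : ℝ) / 2)) a|
      ≤ (√t)⁻¹ * |tailPart (t ^ ((3 : ℝ) / 2)) a| ^ ((4 : ℝ) / 3) := by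
  unfold tailPart
  split_ifs with hta
  · exact abs_le_inv_sqrt_mul_rpow ht hta
  · simp

theorem tendsto_lintegral_enorm_rpow_tailPart {α : Type*} [MeasurableSpace α] {P : Measure α}
    {H : α → ℝ} (hH : Measurable H) {p : ℝ} (hp : 0 < p)
    (hint : Integrable (fun a => |H a| ^ p) P) {c : ℕ → ℝ} (hc : Tendsto c atTop atTop) :
    Tendsto (fun n => ∫⁻ a, ‖|tailPart (c n) (H a)| ^ p‖ₑ ∂P) atTop (𝓝 0) := by
  have hlim : ∀ a, Tendsto (fun n => ‖|tailPart (c n) (H a)| ^ p‖ₑ) atTop (𝓝 0) := fun a =>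
    tendsto_const_nhds.congr' <| (hc.eventually_ge_atTop |H a|).mono fun n hn => by
      simp [tailPart, not_lt.2 hn, Real.zero_rpow hp.ne']
  simpa using tendsto_lintegral_of_dominated_convergence (fun a => ‖|H a| ^ p‖ₑ)
    (fun n => (((measurable_tailPart _).comp hH).abs.pow_const p).enorm)
    (fun n => ae_of_all _ fun a => enorm_le_iff_norm_le.2 <| by
      simp only [Real.norm_eq_abs, abs_of_nonneg (Real.rpow_nonneg (abs_nonneg _) p)]
      exact Real.rpow_le_rpow (abs_nonneg _) (abs_tailPart_le_abs _ _) hp.le)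
    hint.2.ne (ae_of_all _ hlim)

theorem lintegral_lintegral_update_pi {ι : Type*} [Fintype ι] [DecidableEq ι] {E : ι → Type*}
    [∀ i, MeasurableSpace (E i)] (μ : ∀ i, Measure (E i)) [∀ i, IsProbabilityMeasure (μ i)]
    {G : (∀ i, E i) → ℝ≥0∞} (hG : Measurable G) (i : ι) :
    ∫⁻ z, ∫⁻ x, G (Function.update z i x) ∂μ i ∂Measure.pi μ = ∫⁻ z, G z ∂Measure.pi μ := by
  have hmarg : ∫⋯∫⁻_{i}, (∫⋯∫⁻_{i}, G ∂μ) ∂μ = ∫⋯∫⁻_{i}, G ∂μ := by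
    ext z
    simp only [lmarginal_singleton, Function.update_idem, lintegral_const, measure_univ, mul_one]
  simpa [lmarginal_singleton] using lintegral_eq_of_lmarginal_eq {i} (hG.lmarginal μ) hG hmarg

theorem measurable_update_swap {m : ℕ} (i : Fin m) :
    Measurable fun p : ℝ × (Fin m → ℝ) => Function.update p.2 i p.1 :=
  measurable_update'.comp measurable_swap

theorem measurable_proj1 {m : ℕ} (hm : 0 < m) {f : (Fin m → ℝ) → ℝ} (hf : Measurable f)
    (ν : Measure ℝ) [SigmaFinite ν] : Measurable (proj1 m hm f ν) :=
  (hf.comp (measurable_update_swap _)).stronglyMeasurable.integral_prod_right'.measurable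

theorem lintegral_enorm_proj1_le {m : ℕ} (hm : 0 < m) {f : (Fin m → ℝ) → ℝ} (hf : Measurable f)
    (ν : Measure ℝ) [IsProbabilityMeasure ν] :
    ∫⁻ x, ‖proj1 m hm f ν x‖ₑ ∂ν ≤ ∫⁻ z, ‖f z‖ₑ ∂Measure.pi fun _ : Fin m => ν :=
  calc ∫⁻ x, ‖proj1 m hm f ν x‖ₑ ∂ν
      ≤ ∫⁻ x, ∫⁻ z, ‖f (Function.update z ⟨0, hm⟩ x)‖ₑ ∂Measure.pi (fun _ : Fin m => ν) ∂ν :=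
        lintegral_mono fun _ => enorm_integral_le_lintegral_enorm _
    _ = ∫⁻ z, ∫⁻ x, ‖f (Function.update z ⟨0, hm⟩ x)‖ₑ ∂ν ∂Measure.pi (fun _ : Fin m => ν) :=
        lintegral_lintegral_swap (hf.comp (measurable_update_swap _)).enorm.aemeasurable
    _ = _ := lintegral_lintegral_update_pi (fun _ => ν) hf.enorm _

theorem map_fun_fin_eq_pi_map {Ω : Type*} [MeasurableSpace Ω] {μ : Measure Ω}
    {X : ℕ → Ω → ℝ} (hXmeas : ∀ i, Measurable (X i)) (hindep : iIndepFun X μ)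
    (hident : ∀ i, IdentDistrib (X i) (X 0) μ μ) (m : ℕ) :
    μ.map (fun ω (j : Fin m) => X j ω) = Measure.pi fun _ : Fin m => μ.map (X 0) := by
  rw [iIndepFun.map_fun_eq_pi_map (f := fun j : Fin m => X j) (fun j => (hXmeas j).aemeasurable)
    (hindep.precomp Fin.val_injective)]
  simp only [(hident _).map_eq]

theorem lintegral_enorm_sum_abs_comp_le {Ω : Type*} [MeasurableSpace Ω] {μ : Measure Ω}
    {X : ℕ → Ω → ℝ} (hXmeas : ∀ i, Measurable (X i))
    (hident : ∀ i, IdentDistrib (X i) (X 0) μ μ) {g : ℝ → ℝ} (hg : Measurable g) (n : ℕ) :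
    ∫⁻ ω, ‖∑ i ∈ Finset.range n, |g (X i ω)|‖ₑ ∂μ ≤ n * ∫⁻ x, ‖g x‖ₑ ∂μ.map (X 0) :=
  calc ∫⁻ ω, ‖∑ i ∈ Finset.range n, |g (X i ω)|‖ₑ ∂μ
      ≤ ∫⁻ ω, ∑ i ∈ Finset.range n, ‖g (X i ω)‖ₑ ∂μ :=
        lintegral_mono fun ω => (enorm_sum_le _ _).trans_eq (by simp only [Real.enorm_abs])
    _ = ∑ i ∈ Finset.range n, ∫⁻ x, ‖g x‖ₑ ∂μ.map (X i) := by
        rw [lintegral_finsetSum' (f := fun i ω => ‖g (X i ω)‖ₑ) _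
          fun i _ => (hg.comp (hXmeas i)).enorm.aemeasurable]
        simp only [lintegral_map hg.enorm (hXmeas _)]
    _ = n * ∫⁻ x, ‖g x‖ₑ ∂μ.map (X 0) := by
        simp only [(hident _).map_eq, Finset.sum_const, Finset.card_range, nsmul_eq_mul]

theorem lintegral_enorm_sub_integral_le {α : Type*} [MeasurableSpace α] (P : Measure α)
    [IsProbabilityMeasure P] (f : α → ℝ) :
    ∫⁻ a, ‖f a - ∫ b, f b ∂P‖ₑ ∂P ≤ 2 * ∫⁻ a, ‖f a‖ₑ ∂P :=
  calc ∫⁻ a, ‖f a - ∫ b, f b ∂P‖ₑ ∂P ≤ ∫⁻ a, ‖f a‖ₑ + ‖∫ b, f b ∂P‖ₑ ∂P :=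
        lintegral_mono fun a => enorm_sub_le
    _ = ∫⁻ a, ‖f a‖ₑ ∂P + ‖∫ b, f b ∂P‖ₑ := by
        rw [lintegral_add_right _ measurable_const, lintegral_const, measure_univ, mul_one]
    _ ≤ 2 * ∫⁻ a, ‖f a‖ₑ ∂P := by
        rw [two_mul]; gcongr; exact enorm_integral_le_lintegral_enorm f

theorem TendstoInMeasure.of_abs_le {α ι : Type*} [MeasurableSpace α] {μ : Measure α}
    {l : Filter ι} {f g : ι → α → ℝ} (hg : TendstoInMeasure μ g l fun _ => 0)
    (hfg : ∀ i a, |f i a| ≤ g i a) : TendstoInMeasure μ f l fun _ => 0 := by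
  intro ε hε
  refine tendsto_of_tendsto_of_tendsto_of_le_of_le tendsto_const_nhds (hg ε hε)
    (fun _ => zero_le) fun i => measure_mono fun a ha => ?_
  rw [Set.mem_ofPred_eq, edist_dist, Real.dist_0_eq_abs] at ha ⊢
  exact ha.trans (ENNReal.ofReal_le_ofReal ((hfg i a).trans (le_abs_self _)))

theorem lintegral_enorm_proj1_truncTail_le {Ω : Type*} [MeasurableSpace Ω] {μ : Measure Ω}
    [IsProbabilityMeasure μ] {X : ℕ → Ω → ℝ} (hXmeas : ∀ i, Measurable (X i))
    (hindep : iIndepFun X μ) (hident : ∀ i, IdentDistrib (X i) (X 0) μ μ)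
    {m : ℕ} (hm : 0 < m) {h : (Fin m → ℝ) → ℝ} (hhmeas : Measurable h) {n : ℕ} (hn : 0 < n) :
    ∫⁻ x, ‖proj1 m hm (truncTail μ m h X n) (μ.map (X 0)) x‖ₑ ∂μ.map (X 0)
      ≤ 2 * (‖(√n)⁻¹‖ₑ * ∫⁻ ω,
        ‖|tailPart ((n : ℝ) ^ ((3 : ℝ) / 2)) (h fun j => X j ω)| ^ ((4 : ℝ) / 3)‖ₑ ∂μ) := by
  have : IsProbabilityMeasure (μ.map (X 0)) :=
    Measure.isProbabilityMeasure_map (hXmeas 0).aemeasurable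
  have hXv : Measurable fun ω (j : Fin m) => X j ω := measurable_pi_lambda _ fun j => hXmeas j
  have htrunc := measurable_truncTail μ hhmeas X n
  calc ∫⁻ x, ‖proj1 m hm (truncTail μ m h X n) (μ.map (X 0)) x‖ₑ ∂μ.map (X 0)
      ≤ ∫⁻ z, ‖truncTail μ m h X n z‖ₑ ∂Measure.pi fun _ : Fin m => μ.map (X 0) :=
        lintegral_enorm_proj1_le hm htrunc _
    _ = ∫⁻ ω, ‖truncTail μ m h X n (fun j => X j ω)‖ₑ ∂μ := by
        rw [← map_fun_fin_eq_pi_map hXmeas hindep hident, lintegral_map htrunc.enorm hXv]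
    _ ≤ 2 * ∫⁻ ω, ‖tailPart ((n : ℝ) ^ ((3 : ℝ) / 2)) (h fun j => X j ω)‖ₑ ∂μ :=
        lintegral_enorm_sub_integral_le μ _
    _ ≤ _ := by
        rw [← lintegral_const_mul' _ _ enorm_ne_top]
        gcongr with ω
        rw [← enorm_mul, enorm_le_iff_norm_le, Real.norm_eq_abs,
          Real.norm_of_nonneg (by positivity)]
        exact abs_tailPart_le (Nat.cast_pos.2 hn) _

theorem lintegral_enorm_inv_sqrt_mul_sum_proj1_le {Ω : Type*} [MeasurableSpace Ω]
    {μ : Measure Ω} [IsProbabilityMeasure μ] {X : ℕ → Ω → ℝ} (hXmeas : ∀ i, Measurable (X i))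
    (hindep : iIndepFun X μ) (hident : ∀ i, IdentDistrib (X i) (X 0) μ μ)
    {m : ℕ} (hm : 0 < m) {h : (Fin m → ℝ) → ℝ} (hhmeas : Measurable h) {n : ℕ} (hn : 0 < n) :
    ∫⁻ ω, ‖(√n)⁻¹ * (m * ∑ i ∈ Finset.range n,
        |proj1 m hm (truncTail μ m h X n) (μ.map (X 0)) (X i ω)|)‖ₑ ∂μ
      ≤ 2 * m * ∫⁻ ω,
        ‖|tailPart ((n : ℝ) ^ ((3 : ℝ) / 2)) (h fun j => X j ω)| ^ ((4 : ℝ) / 3)‖ₑ ∂μ := by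
  set g := proj1 m hm (truncTail μ m h X n) (μ.map (X 0))
  set D := ∫⁻ ω,
    ‖|tailPart ((n : ℝ) ^ ((3 : ℝ) / 2)) (h fun j => X j ω)| ^ ((4 : ℝ) / 3)‖ₑ ∂μ
  have hscale : ‖(√n)⁻¹‖ₑ * ‖(√n)⁻¹‖ₑ * (n : ℝ≥0∞) = 1 := by
    rw [← Real.enorm_natCast, ← enorm_mul, ← enorm_mul, ← mul_inv,
      Real.mul_self_sqrt (Nat.cast_nonneg n), inv_mul_cancel₀ (by positivity), enorm_one]
  simp only [enorm_mul, Real.enorm_natCast]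
  calc ∫⁻ ω, ‖(√n)⁻¹‖ₑ * (m * ‖∑ i ∈ Finset.range n, |g (X i ω)|‖ₑ) ∂μ
      = ‖(√n)⁻¹‖ₑ * (m * ∫⁻ ω, ‖∑ i ∈ Finset.range n, |g (X i ω)|‖ₑ ∂μ) := by
        rw [lintegral_const_mul' _ _ enorm_ne_top, lintegral_const_mul' _ _ (by simp)]
    _ ≤ ‖(√n)⁻¹‖ₑ * (m * (n * (2 * (‖(√n)⁻¹‖ₑ * D)))) := by
        gcongr
        exact (lintegral_enorm_sum_abs_comp_le hXmeas hident
          (measurable_proj1 hm (measurable_truncTail μ hhmeas X n) _) n).trans <| by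
            gcongr; exact lintegral_enorm_proj1_truncTail_le hXmeas hindep hident hm hhmeas hn
    _ = 2 * m * D := by
        rw [← one_mul (2 * m * D), ← hscale]; ring

theorem stmt_9_general {Ω : Type*} [MeasurableSpace Ω] (μ : Measure Ω) [IsProbabilityMeasure μ]
    (X : ℕ → Ω → ℝ) (hXmeas : ∀ i, Measurable (X i))
    (hindep : iIndepFun X μ)
    (hident : ∀ i, IdentDistrib (X i) (X 0) μ μ)
    (m : ℕ) (hm : 0 < m) (h : (Fin m → ℝ) → ℝ) (hhmeas : Measurable h)
    (hmom : Integrable (fun ω => |h (fun j => X j ω)| ^ ((4 : ℝ) / 3)) μ) :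
    TendstoInMeasure μ
      (fun (n : ℕ) ω => (Real.sqrt n)⁻¹ *
        ⨆ k ∈ Finset.Icc m n,
          |(k : ℝ) * ((k.choose m : ℝ))⁻¹ *
            uStatSum m
              (fun v => ∑ j : Fin m, proj1 m hm (truncTail μ m h X n) (μ.map (X 0)) (v j))
              X k ω|)
      atTop (fun _ => 0) := by
  set g : ℕ → ℝ → ℝ := fun n => proj1 m hm (truncTail μ m h X n) (μ.map (X 0))
  have hg : ∀ n, Measurable (g n) := fun n =>
    measurable_proj1 hm (measurable_truncTail μ hhmeas X n) _
  have hD := tendsto_lintegral_enorm_rpow_tailPart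
    (hhmeas.comp (measurable_pi_lambda _ fun j => hXmeas j)) (by norm_num) hmom
    ((tendsto_rpow_atTop (by norm_num : (0 : ℝ) < 3 / 2)).comp tendsto_natCast_atTop_atTop)
  refine TendstoInMeasure.of_abs_le
    (g := fun n ω => (√n)⁻¹ * (m * ∑ i ∈ Finset.range n, |g n (X i ω)|)) ?_ fun n ω => ?_
  · refine tendstoInMeasure_of_tendsto_eLpNorm one_ne_zero (fun n => ?_)
      aestronglyMeasurable_const ?_
    · exact (((Finset.measurable_sum _ fun i _ =>
        ((hg n).comp (hXmeas i)).abs).const_mul _).const_mul _).aestronglyMeasurable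
    have hlim := ENNReal.Tendsto.const_mul hD (Or.inr (by finiteness : (2 * m : ℝ≥0∞) ≠ ⊤))
    rw [mul_zero] at hlim
    refine tendsto_of_tendsto_of_tendsto_of_le_of_le' tendsto_const_nhds hlim
      (Eventually.of_forall fun _ => zero_le) ?_
    filter_upwards [eventually_gt_atTop 0] with n hn
    simp only [eLpNorm_one_eq_lintegral_enorm, Pi.sub_apply, sub_zero]
    exact lintegral_enorm_inv_sqrt_mul_sum_proj1_le hXmeas hindep hident hm hhmeas hn
  · rw [abs_mul, abs_of_nonneg (by positivity)]
    exact mul_le_mul_of_nonneg_left (abs_iSup_abs_uStatSum_sum_comp_le hm _ X n ω) (by positivity)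

/-- For i.i.d. `X_i` and a symmetric measurable kernel `h` of order
`m ≥ 1` with `E|h|^{4/3} < ∞`, with `h̃^{(2)}_n(x) = E(h^{(2)}_n(X₁,…,X_m) | X₁ = x)` the
first-order projection of the centered truncation tail,
`n^{-1/2} max_{m ≤ k ≤ n} | k C(k,m)^{-1} ∑_{C(k,m)} (h̃^{(2)}_n(X_{i₁}) + … +
h̃^{(2)}_n(X_{i_m})) | → 0` in probability. -/
theorem stmt_9 {Ω : Type*} [MeasurableSpace Ω] (μ : Measure Ω) [IsProbabilityMeasure μ]
    (X : ℕ → Ω → ℝ) (hXmeas : ∀ i, Measurable (X i))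
    (hindep : iIndepFun X μ)
    (hident : ∀ i, IdentDistrib (X i) (X 0) μ μ)
    (m : ℕ) (hm : 0 < m) (h : (Fin m → ℝ) → ℝ) (hhmeas : Measurable h)
    (hsymm : ∀ (σ : Equiv.Perm (Fin m)) (x : Fin m → ℝ), h (x ∘ σ) = h x)
    (hmom : Integrable (fun ω => |h (fun j => X j ω)| ^ ((4 : ℝ) / 3)) μ) :
    TendstoInMeasure μ
      (fun (n : ℕ) ω => (Real.sqrt n)⁻¹ *
        ⨆ k ∈ Finset.Icc m n,
          |(k : ℝ) * ((k.choose m : ℝ))⁻¹ *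
            uStatSum m
              (fun v => ∑ j : Fin m, proj1 m hm (truncTail μ m h X n) (μ.map (X 0)) (v j))
              X k ω|)
      atTop (fun _ => 0) :=
  stmt_9_general μ X hXmeas hindep hident m hm h hhmeas hmom
end

section
/- Let H be a real-valued random variable with E( |H|^{4/3} log|H| ) < ∞ (in particular E|H|^{4/3} < ∞). Then for any constants C₁, C₂ > 0, n^{-1} (C₁ + C₂ log n) · E( H² · 1{|H| ≤ n^{3/2}} ) → 0 as n → ∞. -/
/-!
Write `c t = C₁ + C₂ log t`. Since `H² = |H|^{2/3} |H|^{4/3}`, on `{|H| ≤ n}` we have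
`H² ≤ n^{2/3} |H|^{4/3}`, and on `{n < |H| ≤ n^{3/2}}` we have `H² ≤ n |H|^{4/3}` and
`c n ≤ c |H|`. Hence
`n⁻¹ c n E(H² 1{|H| ≤ n^{3/2}}) ≤ c n n^{-1/3} E|H|^{4/3} + E(c |H| |H|^{4/3} 1{n < |H|})`.
The first term vanishes because `log n = o(n^{1/3})`, the second because `c |H| |H|^{4/3}` is
integrable and the events `{n < |H|}` decrease to `∅`.
-/

open MeasureTheory Filter Topology Real

lemma rpow_le_exp_add_abs_rpow_mul_log {p y : ℝ} (hp : 0 ≤ p) (hy : 0 ≤ y) :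
    y ^ p ≤ exp p + |y ^ p * log y| := by
  rcases le_or_gt y (exp 1) with hle | hgt
  · have : y ^ p ≤ exp p := by
      simpa only [exp_one_rpow] using rpow_le_rpow hy hle hp
    linarith [abs_nonneg (y ^ p * log y)]
  · have hlog : 1 ≤ log y := by simpa using log_le_log (exp_pos 1) hgt.le
    have : y ^ p ≤ y ^ p * log y := le_mul_of_one_le_right (by positivity) hlog
    linarith [le_abs_self (y ^ p * log y), exp_pos p]

lemma integrable_abs_rpow_of_integrable_abs_rpow_mul_log {Ω : Type*} [MeasurableSpace Ω]
    {μ : Measure Ω} [IsFiniteMeasure μ] {X : Ω → ℝ} (hX : Measurable X) {p : ℝ} (hp : 0 ≤ p)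
    (hlog_int : Integrable (fun ω => |X ω| ^ p * log |X ω|) μ) :
    Integrable (fun ω => |X ω| ^ p) μ :=
  ((integrable_const (exp p)).add hlog_int.abs).mono'
    (hX.abs.pow_const p).aestronglyMeasurable <| .of_forall fun ω => by
      rw [norm_of_nonneg (by positivity)]
      exact rpow_le_exp_add_abs_rpow_mul_log hp (abs_nonneg _)

lemma tendsto_setIntegral_lt_nhds_zero {Ω : Type*} [MeasurableSpace Ω] {μ : Measure Ω}
    {X : Ω → ℝ} (hX : Measurable X) {f : Ω → ℝ} (hf : Integrable f μ) :
    Tendsto (fun n : ℕ => ∫ ω in {ω | (n : ℝ) < X ω}, f ω ∂μ) atTop (𝓝 0) := by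
  have hempty : ⋂ n : ℕ, {ω | (n : ℝ) < X ω} = ∅ := by
    ext ω
    obtain ⟨n, hn⟩ := exists_nat_ge (X ω)
    simpa using ⟨n, hn⟩
  have hanti : Antitone fun n : ℕ => {ω | (n : ℝ) < X ω} := fun m n hmn ω hω =>
    show (m : ℝ) < X ω from (Nat.cast_le.2 hmn).trans_lt hω
  simpa [hempty] using tendsto_setIntegral_of_antitone
    (fun n => measurableSet_lt measurable_const hX) hanti ⟨0, hf.integrableOn⟩

lemma tendsto_add_mul_log_mul_rpow_neg_atTop (a b : ℝ) {r : ℝ} (hr : 0 < r) :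
    Tendsto (fun x => (a + b * log x) * x ^ (-r)) atTop (𝓝 0) := by
  have hlim := ((tendsto_rpow_neg_atTop hr).const_mul a).add
    ((isLittleO_log_rpow_atTop hr).tendsto_div_nhds_zero.const_mul b)
  rw [mul_zero, mul_zero, add_zero] at hlim
  refine hlim.congr' ?_
  filter_upwards [eventually_gt_atTop 0] with x hx
  rw [rpow_neg hx.le, div_eq_mul_inv]
  ring

lemma sq_eq_rpow_mul_rpow {x : ℝ} (hx : 0 ≤ x) : x ^ 2 = x ^ (2 / 3 : ℝ) * x ^ (4 / 3 : ℝ) := by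
  rw [← rpow_add' hx (by norm_num)]
  norm_num

lemma inv_mul_sq_le {t x a b : ℝ} (ht : 0 < t) (hx : 0 ≤ x) (ha : 0 ≤ a)
    (hab : t < x → a ≤ b) :
    t⁻¹ * a * (if x ≤ t ^ (3 / 2 : ℝ) then x ^ 2 else 0) ≤
      a * t ^ (-(1 / 3) : ℝ) * x ^ (4 / 3 : ℝ) + if t < x then b * x ^ (4 / 3 : ℝ) else 0 := by
  have hx43 : 0 ≤ x ^ (4 / 3 : ℝ) := by positivity
  have hfirst : 0 ≤ a * t ^ (-(1 / 3) : ℝ) * x ^ (4 / 3 : ℝ) := by positivity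
  split_ifs with hx_le htx htx
  · have hx23 : x ^ (2 / 3 : ℝ) ≤ t := by
      simpa [← rpow_mul ht.le] using rpow_le_rpow hx hx_le (by norm_num : (0 : ℝ) ≤ 2 / 3)
    have := hab htx
    calc t⁻¹ * a * x ^ 2 = a * x ^ (4 / 3 : ℝ) * (t⁻¹ * x ^ (2 / 3 : ℝ)) := by
          rw [sq_eq_rpow_mul_rpow hx]; ring
      _ ≤ a * x ^ (4 / 3 : ℝ) * (t⁻¹ * t) := by gcongr
      _ ≤ b * x ^ (4 / 3 : ℝ) := by rw [inv_mul_cancel₀ ht.ne', mul_one]; gcongr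
      _ ≤ _ := le_add_of_nonneg_left hfirst
  · have hx23 : x ^ (2 / 3 : ℝ) ≤ t ^ (2 / 3 : ℝ) := rpow_le_rpow hx (not_lt.1 htx) (by norm_num)
    have ht_pow : t⁻¹ * t ^ (2 / 3 : ℝ) = t ^ (-(1 / 3) : ℝ) := by
      rw [← rpow_neg_one, ← rpow_add ht]
      norm_num
    calc t⁻¹ * a * x ^ 2 = a * (t⁻¹ * x ^ (2 / 3 : ℝ)) * x ^ (4 / 3 : ℝ) := by
          rw [sq_eq_rpow_mul_rpow hx]; ring
      _ ≤ a * (t⁻¹ * t ^ (2 / 3 : ℝ)) * x ^ (4 / 3 : ℝ) := by gcongr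
      _ = _ := by rw [ht_pow, add_zero]
  · have := ha.trans (hab htx)
    simp only [mul_zero]
    positivity
  · simpa using hfirst

lemma inv_mul_integral_sq_le {Ω : Type*} [MeasurableSpace Ω] {μ : Measure Ω} {X : Ω → ℝ}
    (hX : Measurable X) {c : ℝ → ℝ} (hX_int : Integrable (fun ω => |X ω| ^ (4 / 3 : ℝ)) μ)
    (hcX_int : Integrable (fun ω => c |X ω| * |X ω| ^ (4 / 3 : ℝ)) μ) {t : ℝ} (ht : 0 < t)
    (hct : 0 ≤ c t) (hc : ∀ x, t < x → c t ≤ c x) :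
    t⁻¹ * c t * ∫ ω, (if |X ω| ≤ t ^ (3 / 2 : ℝ) then X ω ^ 2 else 0) ∂μ ≤
      c t * t ^ (-(1 / 3) : ℝ) * ∫ ω, |X ω| ^ (4 / 3 : ℝ) ∂μ +
        ∫ ω in {ω | t < |X ω|}, c |X ω| * |X ω| ^ (4 / 3 : ℝ) ∂μ := by
  have hs : MeasurableSet {ω | t < |X ω|} := measurableSet_lt measurable_const hX.abs
  rw [← integral_const_mul, ← integral_const_mul, ← integral_indicator hs,
    ← integral_add (hX_int.const_mul _) (hcX_int.indicator hs)]
  refine integral_mono_of_nonneg (.of_forall fun ω => ?_)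
    ((hX_int.const_mul _).add (hcX_int.indicator hs)) (.of_forall fun ω => ?_)
  · have : 0 ≤ t⁻¹ * c t := by positivity
    dsimp only
    split_ifs <;> positivity
  · simpa [Set.indicator_apply, sq_abs] using
      inv_mul_sq_le ht (abs_nonneg (X ω)) hct (hc |X ω|)

/-- If `E(|H|^{4/3} log|H|) < ∞` (in particular `E|H|^{4/3} < ∞`) then
for any constants `C₁, C₂ > 0`,
`n⁻¹ (C₁ + C₂ log n) · E(H² · 1{|H| ≤ n^{3/2}}) → 0` as `n → ∞`. -/
theorem stmt_12 {Ω : Type*} [MeasurableSpace Ω] (μ : Measure Ω) [IsProbabilityMeasure μ]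
    (H : Ω → ℝ) (hH : Measurable H)
    (hmom : Integrable (fun ω => |H ω| ^ ((4 : ℝ) / 3) * Real.log |H ω|) μ)
    (C₁ C₂ : ℝ) (hC₁ : 0 < C₁) (hC₂ : 0 < C₂) :
    Tendsto
      (fun n : ℕ => ((n : ℝ))⁻¹ * (C₁ + C₂ * Real.log n) *
        ∫ ω, (if |H ω| ≤ (n : ℝ) ^ ((3 : ℝ) / 2) then H ω ^ 2 else 0) ∂μ)
      atTop (𝓝 0) := by
  set c : ℝ → ℝ := fun t => C₁ + C₂ * log t
  have hrpow_int : Integrable (fun ω => |H ω| ^ (4 / 3 : ℝ)) μ :=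
    integrable_abs_rpow_of_integrable_abs_rpow_mul_log hH (by norm_num) hmom
  have hc_int : Integrable (fun ω => c |H ω| * |H ω| ^ (4 / 3 : ℝ)) μ :=
    ((hrpow_int.const_mul C₁).add (hmom.const_mul C₂)).congr <| .of_forall fun ω => by
      simp only [c, Pi.add_apply]
      ring
  have hc_nonneg : ∀ n : ℕ, 0 ≤ c n := fun n => by
    have := log_natCast_nonneg n
    positivity
  have hlim := (((tendsto_add_mul_log_mul_rpow_neg_atTop C₁ C₂ (r := 1 / 3) (by norm_num)).comp
    tendsto_natCast_atTop_atTop).mul_const (∫ ω, |H ω| ^ (4 / 3 : ℝ) ∂μ)).add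
    (tendsto_setIntegral_lt_nhds_zero hH.abs hc_int)
  rw [zero_mul, zero_add] at hlim
  refine tendsto_of_tendsto_of_tendsto_of_le_of_le' tendsto_const_nhds hlim ?_ ?_
  · refine .of_forall fun n => mul_nonneg (by have := hc_nonneg n; positivity)
      (integral_nonneg fun ω => ?_)
    split_ifs <;> positivity
  · filter_upwards [eventually_gt_atTop 0] with n hn
    exact inv_mul_integral_sq_le hH hrpow_int hc_int (Nat.cast_pos.2 hn) (hc_nonneg n)
      fun x hx => by
        have := log_le_log (Nat.cast_pos.2 hn) hx.le
        simp only [c]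
        gcongr
end
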